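/- For the service distribution family G(t) = 1 - ((1-e^{-ρ})(λ+β))/(λ e^{-ρ}(e^{(λ+β)t} - 1) + λ) with constant β satisfying -λ < β ≤ λ/(e^ρ - 1), one has ∫₀^∞ (1 - G(t)) dt = α where ρ = λα; i.e., this family has mean service time α consistent with the traffic intensity ρ. -/

import Mathlib

open MeasureTheory Real Set Filter Topology

/-!
With `c = e^{-ρ}` and `k = λ + β`, the tail `1 - G t` equals `(1/λ) (1 - c) k / (c e^{kt} + 1 - c)`,
whose antiderivative is `(1/λ) (k t - log (c e^{kt} + 1 - c))`. This vanishes at `0` and, being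
`-(1/λ) log (c + (1 - c) e^{-kt})`, tends to `-(log c)/λ = ρ/λ = α` as `t → ∞`.
-/

namespace ExpMix

variable {c : ℝ}

theorem denom_pos (hc₀ : 0 < c) (hc₁ : c ≤ 1) (x : ℝ) : 0 < c * exp x + (1 - c) := by
  have := exp_pos x
  nlinarith

theorem hasDerivAt_antideriv (k t : ℝ) (hD : c * exp (k * t) + (1 - c) ≠ 0) :
    HasDerivAt (fun t => k * t - log (c * exp (k * t) + (1 - c)))
      ((1 - c) * k / (c * exp (k * t) + (1 - c))) t := by
  have hlin : HasDerivAt (fun t => k * t) k t := by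
    simpa using (hasDerivAt_id t).const_mul k
  have hD' : HasDerivAt (fun t => c * exp (k * t) + (1 - c)) (c * (exp (k * t) * k)) t :=
    (hlin.exp.const_mul c).add_const (1 - c)
  refine (hlin.sub (hD'.log hD)).congr_deriv ?_
  field_simp
  ring

theorem antideriv_eq_neg_log (k t : ℝ) (hD : 0 < c * exp (k * t) + (1 - c)) :
    k * t - log (c * exp (k * t) + (1 - c)) = -log (c + (1 - c) * exp (-(k * t))) := by
  have hfactor : c * exp (k * t) + (1 - c) = exp (k * t) * (c + (1 - c) * exp (-(k * t))) := by
    rw [exp_neg]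
    field_simp
  have hpos : 0 < c + (1 - c) * exp (-(k * t)) :=
    pos_of_mul_pos_right (hfactor ▸ hD) (exp_pos _).le
  rw [hfactor, log_mul (exp_pos _).ne' hpos.ne', log_exp]
  ring

theorem tendsto_antideriv_atTop (hc₀ : 0 < c) (hc₁ : c ≤ 1) {k : ℝ} (hk : 0 < k) :
    Tendsto (fun t => k * t - log (c * exp (k * t) + (1 - c))) atTop (𝓝 (-log c)) := by
  simp_rw [antideriv_eq_neg_log k _ (denom_pos hc₀ hc₁ _)]
  have hexp : Tendsto (fun t => exp (-(k * t))) atTop (𝓝 0) :=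
    tendsto_exp_atBot.comp (tendsto_neg_atTop_atBot.comp (tendsto_id.const_mul_atTop hk))
  have hmix : Tendsto (fun t => c + (1 - c) * exp (-(k * t))) atTop (𝓝 c) := by
    simpa using tendsto_const_nhds.add (hexp.const_mul (1 - c))
  exact ((continuousAt_log hc₀.ne').tendsto.comp hmix).neg

theorem integral_Ioi (hc₀ : 0 < c) (hc₁ : c ≤ 1) {k : ℝ} (hk : 0 < k) :
    ∫ t in Ioi (0 : ℝ), (1 - c) * k / (c * exp (k * t) + (1 - c)) = -log c := by
  have hderiv (t : ℝ) := hasDerivAt_antideriv k t (denom_pos hc₀ hc₁ (k * t)).ne'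
  have hnonneg (t : ℝ) : 0 ≤ (1 - c) * k / (c * exp (k * t) + (1 - c)) :=
    div_nonneg (mul_nonneg (sub_nonneg.2 hc₁) hk.le) (denom_pos hc₀ hc₁ _).le
  rw [integral_Ioi_of_hasDerivAt_of_nonneg (hderiv 0).continuousAt.continuousWithinAt
    (fun t _ => hderiv t) (fun t _ => hnonneg t) (tendsto_antideriv_atTop hc₀ hc₁ hk)]
  simp

end ExpMix

theorem special_service_family_mean_general
    (l α ρ β : ℝ) (hl : 0 < l) (hα : 0 < α) (hρ : ρ = l * α)
    (hβ₁ : -l < β)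
    (G : ℝ → ℝ)
    (hG : ∀ t : ℝ, 0 ≤ t → G t = 1 -
      (1 - Real.exp (-ρ)) * (l + β) /
        (l * Real.exp (-ρ) * (Real.exp ((l + β) * t) - 1) + l)) :
    ∫ t in Ioi (0:ℝ), (1 - G t) = α := by
  have hk : 0 < l + β := by linarith
  have hc₁ : exp (-ρ) ≤ 1 := exp_le_one_iff.2 (by rw [hρ]; nlinarith)
  have htail : ∀ t ∈ Ioi (0 : ℝ), 1 - G t =
      (1 - exp (-ρ)) * (l + β) / (exp (-ρ) * exp ((l + β) * t) + (1 - exp (-ρ))) / l := by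
    intro t ht
    rw [hG t (le_of_lt ht), div_div]
    ring_nf
  rw [setIntegral_congr_fun measurableSet_Ioi htail, integral_div,
    ExpMix.integral_Ioi (exp_pos _) hc₁ hk, log_exp, neg_neg, hρ]
  field_simp

/-- For the service time distribution family
`G(t) = 1 - (1-e^{-ρ})(λ+β) / (λ e^{-ρ}(e^{(λ+β)t} - 1) + λ)` with constant `β`,
`-λ < β ≤ λ/(e^ρ - 1)`, one has `∫₀^∞ (1 - G(t)) dt = α` where `ρ = λα`. -/
theorem special_service_family_mean
    (l α ρ β : ℝ) (hl : 0 < l) (hα : 0 < α) (hρ : ρ = l * α)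
    (hβ₁ : -l < β) (hβ₂ : β ≤ l / (Real.exp ρ - 1))
    (G : ℝ → ℝ)
    (hG : ∀ t : ℝ, 0 ≤ t → G t = 1 -
      (1 - Real.exp (-ρ)) * (l + β) /
        (l * Real.exp (-ρ) * (Real.exp ((l + β) * t) - 1) + l)) :
    ∫ t in Ioi (0:ℝ), (1 - G t) = α :=
  special_service_family_mean_general l α ρ β hl hα hρ hβ₁ G hG
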